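/- arXiv:2406.03926 — 2 statements merged into one kernel-verified Lean document; each statement's English description precedes it below -/
import Mathlib

section
/- Let A₁ = [[-1,0],[0,1]] and A₂ = [[0,1],[1,0]] in GL(2,ℂ), let p : GL(2,ℂ) → PGL(2,ℂ) be the quotient by the central subgroup of nonzero scalar matrices, and let G ⊆ PGL(2,ℂ) be the subgroup generated by p(A₁) and p(A₂). Then there is no group homomorphism σ : G → GL(2,ℂ) such that p ∘ σ equals the inclusion homomorphism of G into PGL(2,ℂ). -/
open Matrix

noncomputable section

/-- The scalar embedding `ℂˣ →* GL(2,ℂ)`. -/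
def scalarHom : ℂˣ →* GL (Fin 2) ℂ :=
  Units.map (Matrix.scalar (Fin 2)).toMonoidHom

/-- The central subgroup of nonzero scalar matrices in `GL(2,ℂ)`. -/
def scalarSubgroup : Subgroup (GL (Fin 2) ℂ) := scalarHom.range

instance scalarSubgroup_normal : scalarSubgroup.Normal := by
  constructor
  rintro n ⟨c, rfl⟩ g
  refine ⟨c, ?_⟩
  have hcomm : g * scalarHom c = scalarHom c * g :=
    Units.ext (Matrix.scalar_commute (c : ℂ) (fun r' => Commute.all _ _)
      (g : Matrix (Fin 2) (Fin 2) ℂ)).symm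
  rw [hcomm]
  group

/-- `PGL(2,ℂ)`, the quotient of `GL(2,ℂ)` by the central subgroup of nonzero
scalar matrices. -/
def PGL2 : Type := GL (Fin 2) ℂ ⧸ scalarSubgroup

instance : Group PGL2 := QuotientGroup.Quotient.group scalarSubgroup

/-- The quotient homomorphism `p : GL(2,ℂ) →* PGL(2,ℂ)`. -/
def p : GL (Fin 2) ℂ →* PGL2 := QuotientGroup.mk' scalarSubgroup

lemma M1_mul_M1 : (!![-1, 0; 0, 1] : Matrix (Fin 2) (Fin 2) ℂ) * !![-1, 0; 0, 1] = 1 := by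
  simp [Matrix.mul_fin_two, Matrix.one_fin_two]

lemma M2_mul_M2 : (!![0, 1; 1, 0] : Matrix (Fin 2) (Fin 2) ℂ) * !![0, 1; 1, 0] = 1 := by
  simp [Matrix.mul_fin_two, Matrix.one_fin_two]

/-- The matrix `A₁ = [[-1,0],[0,1]]` as an element of `GL(2,ℂ)`. -/
def A1 : GL (Fin 2) ℂ := ⟨!![-1, 0; 0, 1], !![-1, 0; 0, 1], M1_mul_M1, M1_mul_M1⟩

/-- The matrix `A₂ = [[0,1],[1,0]]` as an element of `GL(2,ℂ)`. -/
def A2 : GL (Fin 2) ℂ := ⟨!![0, 1; 1, 0], !![0, 1; 1, 0], M2_mul_M2, M2_mul_M2⟩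


lemma scalar_comm (c : ℂˣ) (g : GL (Fin 2) ℂ) : scalarHom c * g = g * scalarHom c :=
  Units.ext (Matrix.scalar_commute (c : ℂ) (fun r' => Commute.all _ _)
    (g : Matrix (Fin 2) (Fin 2) ℂ))

/-- The Klein four subgroup `G` of `PGL(2,ℂ)` generated by `p(A₁)` and
`p(A₂)` admits no homomorphic lifting `σ : G → GL(2,ℂ)` with `p ∘ σ` the inclusion. -/
theorem no_lift_of_klein_four :
    ¬ ∃ σ : (Subgroup.closure {p A1, p A2} : Subgroup PGL2) →* GL (Fin 2) ℂ,
      p.comp σ = (Subgroup.closure {p A1, p A2} : Subgroup PGL2).subtype := by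
  rintro ⟨σ, hσ⟩
  have h1mem : p A1 ∈ Subgroup.closure {p A1, p A2} := Subgroup.subset_closure (by simp)
  have h2mem : p A2 ∈ Subgroup.closure {p A1, p A2} := Subgroup.subset_closure (by simp)
  set g1 : (Subgroup.closure {p A1, p A2} : Subgroup PGL2) := ⟨p A1, h1mem⟩
  set g2 : (Subgroup.closure {p A1, p A2} : Subgroup PGL2) := ⟨p A2, h2mem⟩
  have hp1 : p (σ g1) = p A1 := congrFun (congrArg DFunLike.coe hσ) g1
  have hp2 : p (σ g2) = p A2 := congrFun (congrArg DFunLike.coe hσ) g2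
  obtain ⟨z1, ⟨c, rfl⟩, hc⟩ := (QuotientGroup.mk'_eq_mk' _).mp hp1
  obtain ⟨z2, ⟨d, rfl⟩, hd⟩ := (QuotientGroup.mk'_eq_mk' _).mp hp2
  have hcommPGL : p A1 * p A2 = p A2 * p A1 := by
    rw [← p.map_mul, ← p.map_mul]
    apply (QuotientGroup.mk'_eq_mk' _).mpr
    refine ⟨scalarHom (-1), ⟨-1, rfl⟩, ?_⟩
    apply Units.ext
    show (!![-1, 0; 0, 1] * !![0, 1; 1, 0] : Matrix (Fin 2) (Fin 2) ℂ) * Matrix.scalar (Fin 2) ((-1 : ℂˣ) : ℂ) = !![0, 1; 1, 0] * !![-1, 0; 0, 1]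
    ext i j
    fin_cases i <;> fin_cases j <;>
      simp [Matrix.mul_apply, Fin.sum_univ_two, Matrix.scalar_apply, Matrix.smul_apply,
        Matrix.one_apply]
  have hcommG : g1 * g2 = g2 * g1 := Subtype.ext hcommPGL
  have hcommσ : σ g1 * σ g2 = σ g2 * σ g1 := by rw [← σ.map_mul, ← σ.map_mul, hcommG]
  have key : σ g1 * scalarHom c * (σ g2 * scalarHom d)
      = σ g2 * scalarHom d * (σ g1 * scalarHom c) := by
    calc σ g1 * scalarHom c * (σ g2 * scalarHom d)
        = σ g1 * σ g2 * (scalarHom c * scalarHom d) := by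
          rw [mul_assoc, mul_assoc, ← mul_assoc (scalarHom c), scalar_comm c (σ g2), mul_assoc]
      _ = σ g2 * σ g1 * (scalarHom d * scalarHom c) := by
          rw [hcommσ, ← scalarHom.map_mul, mul_comm c d, scalarHom.map_mul]
      _ = σ g2 * scalarHom d * (σ g1 * scalarHom c) := by
          rw [mul_assoc, mul_assoc, ← mul_assoc (scalarHom d), scalar_comm d (σ g1), mul_assoc]
  rw [hc, hd] at key
  have hkey := congrArg (fun g : GL (Fin 2) ℂ => (g : Matrix (Fin 2) (Fin 2) ℂ) 0 1) key
  simp only [Units.val_mul] at hkey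
  have h2 : (!![-1, 0; 0, 1] * !![0, 1; 1, 0] : Matrix (Fin 2) (Fin 2) ℂ) 0 1 =
      (!![0, 1; 1, 0] * !![-1, 0; 0, 1] : Matrix (Fin 2) (Fin 2) ℂ) 0 1 := hkey
  simp [Matrix.mul_apply, Fin.sum_univ_two] at h2
  exact absurd h2 (by norm_num)
end
end

section
/- Let A₁ = [[-1,0],[0,1]] and A₂ = [[0,1],[1,0]] in GL(2,ℂ), and let G̃ ⊆ GL(2,ℂ) be the subgroup generated by A₁ and A₂. Then every group homomorphism χ : G̃ → ℂ* satisfies χ(−I) = 1. Equivalently, G̃ has no one-dimensional complex representation on which the central element −I acts as multiplication by −1. -/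
open Matrix

noncomputable section

/-- Every homomorphism `χ : G̃ → ℂ*`, where `G̃ ⊆ GL(2,ℂ)` is generated by
`A₁` and `A₂`, satisfies `χ(-I) = 1`. -/
theorem character_trivial_on_neg_one
    (χ : (Subgroup.closure {A1, A2} : Subgroup (GL (Fin 2) ℂ)) →* ℂˣ)
    (x : (Subgroup.closure {A1, A2} : Subgroup (GL (Fin 2) ℂ)))
    (hx : (x : GL (Fin 2) ℂ) = -1) :
    χ x = 1 := by
  have h1 : A1 ∈ Subgroup.closure ({A1, A2} : Set (GL (Fin 2) ℂ)) :=
    Subgroup.subset_closure (by simp)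
  have h2 : A2 ∈ Subgroup.closure ({A1, A2} : Set (GL (Fin 2) ℂ)) :=
    Subgroup.subset_closure (by simp)
  set a1 : (Subgroup.closure {A1, A2} : Subgroup (GL (Fin 2) ℂ)) := ⟨A1, h1⟩
  set a2 : (Subgroup.closure {A1, A2} : Subgroup (GL (Fin 2) ℂ)) := ⟨A2, h2⟩
  have hxeq : x = a1 * a2 * a1 * a2 := by
    apply Subtype.ext
    rw [hx]
    show (-1 : GL (Fin 2) ℂ) = A1 * A2 * A1 * A2
    apply Units.ext
    show (-1 : Matrix (Fin 2) (Fin 2) ℂ) = _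
    simp only [A1, A2, Units.val_mul]
    norm_num [Matrix.mul_fin_two, Matrix.one_fin_two, ← Matrix.ext_iff, Fin.forall_fin_two]
  have ha1 : a1 * a1 = 1 := by
    apply Subtype.ext
    show A1 * A1 = 1
    exact Units.ext M1_mul_M1
  have ha2 : a2 * a2 = 1 := by
    apply Subtype.ext
    show A2 * A2 = 1
    exact Units.ext M2_mul_M2
  have e1 : χ a1 * χ a1 = 1 := by rw [← _root_.map_mul, ha1, _root_.map_one]
  have e2 : χ a2 * χ a2 = 1 := by rw [← _root_.map_mul, ha2, _root_.map_one]
  calc χ x = χ a1 * χ a2 * χ a1 * χ a2 := by rw [hxeq]; simp [_root_.map_mul]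
    _ = (χ a1 * χ a1) * (χ a2 * χ a2) := by
        rw [mul_assoc (χ a1 * χ a2), mul_mul_mul_comm]
    _ = 1 := by rw [e1, e2, one_mul]
end
end
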